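/- Let G1 and G2 be vertex-disjoint graphs with a = |V(G1)| ≥ 1 and n − a = |V(G2)| ≥ 1, and let c1 > 0 be a real number such that e(G1) ≤ c1 and a > 2c1. Let G = G1 ∨ G2 be the join of G1 and G2. Then q(G) < q(K̄_a ∨ G2) + 4c1(n − a)/(a − 2c1)², where K̄_a denotes the empty graph on a vertices. -/

import Mathlib

open Finset SimpleGraph
open scoped Classical

/-- `F` has a copy in `G`: an injective graph homomorphism. -/
def SimpleGraph.ContainsCopy {α β : Type*} (F : SimpleGraph α) (G : SimpleGraph β) : Prop :=
  ∃ f : F →g G, Function.Injective f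

/-- `G` is `F`-free. -/
def SimpleGraph.CopyFreeOf {α β : Type*} (F : SimpleGraph α) (G : SimpleGraph β) : Prop :=
  ¬ F.ContainsCopy G

/-- Number of edges of a graph. -/
noncomputable def edgeCount {V : Type*} (G : SimpleGraph V) : ℕ := G.edgeSet.ncard

/-- Degree of a vertex. -/
noncomputable def degCount {V : Type*} (G : SimpleGraph V) (v : V) : ℕ := (G.neighborSet v).ncard

/-- Turán number: max number of edges of an F-free graph on n vertices. -/
noncomputable def exNum {α : Type*} (F : SimpleGraph α) (n : ℕ) : ℕ :=
  sSup {m | ∃ G : SimpleGraph (Fin n), F.CopyFreeOf G ∧ edgeCount G = m}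

/-- Number of edges of the Turán graph `T_r(n)`. -/
noncomputable def turanNum (r n : ℕ) : ℕ := edgeCount (turanGraph n r)

/-- The hypothesis `ex(n,F) = t_r(n) + O(1)`. -/
def ExIsTuranPlusO1 {α : Type*} (F : SimpleGraph α) (r : ℕ) : Prop :=
  ∃ C : ℤ, ∀ n : ℕ, |(exNum F n : ℤ) - (turanNum r n : ℤ)| ≤ C

/-- `c0 = limsup (ex(n,F) - t_r(n))`. -/
noncomputable def exC0 {α : Type*} (F : SimpleGraph α) (r : ℕ) : ℤ :=
  Filter.limsup (fun n : ℕ => (exNum F n : ℤ) - (turanNum r n : ℤ)) Filter.atTop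

/-- The signless Laplacian matrix `Q(G) = D(G) + A(G)` of a graph. -/
noncomputable def signlessLaplacian {V : Type*} (G : SimpleGraph V) : Matrix V V ℝ :=
  Matrix.of fun u v =>
    (if u = v then (degCount G u : ℝ) else 0) + (if G.Adj u v then 1 else 0)

/-- The signless Laplacian spectral radius `q(G)`: the largest eigenvalue of `Q(G)`. -/
noncomputable def qRad {V : Type*} [Fintype V] [DecidableEq V] (G : SimpleGraph V) : ℝ :=
  sSup (spectrum ℝ (signlessLaplacian G))

/-- Number of edges of `G` with both endpoints in `s`. -/
noncomputable def edgesInside {V : Type*} (G : SimpleGraph V) (s : Set V) : ℕ :=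
  {e ∈ G.edgeSet | ∀ v ∈ e, v ∈ s}.ncard

/-- `e(G_in)` for a partition `P`. -/
noncomputable def edgesIn {V : Type*} (G : SimpleGraph V) {r : ℕ} (P : Fin r → Finset V) : ℕ :=
  ∑ i, edgesInside G (P i)

/-- `e(G_out)`: missing cross pairs for a partition `P`. -/
noncomputable def missingCross {V : Type*} (G : SimpleGraph V) {r : ℕ} (P : Fin r → Finset V) : ℕ :=
  {e : Sym2 V | ¬ e.IsDiag ∧ e ∉ G.edgeSet ∧ ¬ ∃ i, ∀ v ∈ e, v ∈ P i}.ncard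

/-- `P` is a partition of the vertex set into `r` parts. -/
def IsVertexPartition {V : Type*} {r : ℕ} (P : Fin r → Finset V) : Prop :=
  (∀ i j, i ≠ j → Disjoint (P i) (P j)) ∧ ∀ v, ∃ i, v ∈ P i

/-- The join of two vertex-disjoint graphs. -/
def joinGraph {α β : Type*} (G₁ : SimpleGraph α) (G₂ : SimpleGraph β) :
    SimpleGraph (α ⊕ β) where
  Adj u v :=
    match u, v with
    | Sum.inl a, Sum.inl b => G₁.Adj a b
    | Sum.inr a, Sum.inr b => G₂.Adj a b
    | Sum.inl _, Sum.inr _ => True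
    | Sum.inr _, Sum.inl _ => True
  symm := by
    constructor
    rintro (a | a) (b | b) h <;> first | trivial | exact G₁.adj_symm h | exact G₂.adj_symm h
  loopless := by
    constructor
    rintro (a | a) h
    exacts [G₁.irrefl h, G₂.irrefl h]

set_option linter.unusedSectionVars false
set_option maxHeartbeats 1000000

open Matrix

section Helpers
variable {V : Type*} [Fintype V] [DecidableEq V]


lemma psd_smul_one_sub (M : Matrix V V ℝ) (hM : M.IsHermitian) (t : ℝ)
    (ht : ∀ i, hM.eigenvalues i ≤ t) :
    PosSemidef (t • (1 : Matrix V V ℝ) - M) := by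
  have key : t • (1 : Matrix V V ℝ) - M =
      (hM.eigenvectorUnitary : Matrix V V ℝ) *
        diagonal (fun i => t - hM.eigenvalues i) *
        star (hM.eigenvectorUnitary : Matrix V V ℝ) := by
    have hd : diagonal (fun i => t - hM.eigenvalues i) =
        t • (1 : Matrix V V ℝ) - diagonal (RCLike.ofReal ∘ hM.eigenvalues) := by
      ext i j
      by_cases h : i = j <;>
        simp [Matrix.diagonal_apply, h, Matrix.one_apply, Function.comp, Matrix.sub_apply,
          Matrix.smul_apply]
    rw [hd, Matrix.mul_sub, Matrix.sub_mul]
    congr 1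
    · rw [Matrix.mul_smul, Matrix.mul_one, Matrix.smul_mul]
      congr 1
      exact (Matrix.mem_unitaryGroup_iff.mp hM.eigenvectorUnitary.2).symm
    · conv_lhs => rw [hM.spectral_theorem, Unitary.conjStarAlgAut_apply]
  rw [key]
  exact (posSemidef_diagonal_iff.mpr fun i => sub_nonneg.2 (ht i)).mul_mul_conjTranspose_same _

lemma quadform_le_of_eig (M : Matrix V V ℝ) (hM : M.IsHermitian) (t : ℝ)
    (ht : ∀ i, hM.eigenvalues i ≤ t) (x : V → ℝ) :
    x ⬝ᵥ M *ᵥ x ≤ t * (x ⬝ᵥ x) := by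
  have hpsd := psd_smul_one_sub M hM t ht
  have h := hpsd.dotProduct_mulVec_nonneg x
  rw [star_trivial, Matrix.sub_mulVec, dotProduct_sub, Matrix.smul_mulVec,
    Matrix.one_mulVec, dotProduct_smul] at h
  simp only [smul_eq_mul] at h
  linarith [h]

lemma mem_spectrum_exists_eigvec (M : Matrix V V ℝ) {μ : ℝ}
    (hμ : μ ∈ spectrum ℝ M) : ∃ x : V → ℝ, x ≠ 0 ∧ M *ᵥ x = μ • x := by
  rw [← Matrix.spectrum_toEuclideanLin (𝕜 := ℝ)] at hμ
  have hev : Module.End.HasEigenvalue (Matrix.toEuclideanLin M) μ :=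
    Module.End.hasEigenvalue_iff_mem_spectrum.mpr hμ
  obtain ⟨v, hv⟩ := hev.exists_hasEigenvector
  refine ⟨v, by simpa using hv.2, ?_⟩
  have := hv.apply_eq_smul
  have h2 : ∀ i, (Matrix.toEuclideanLin M v) i = (μ • v) i := fun i => by rw [this]
  funext i
  simpa [Matrix.toEuclideanLin_apply] using h2 i

lemma dotProduct_self_pos {x : V → ℝ} (hx : x ≠ 0) : 0 < x ⬝ᵥ x := by
  have h0 : (0:ℝ) ≤ x ⬝ᵥ x := Finset.sum_nonneg fun i _ => mul_self_nonneg _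
  rcases h0.lt_or_eq with h | h
  · exact h
  · exact absurd (dotProduct_self_eq_zero.mp h.symm) hx

lemma sSup_spectrum_eq_max [Nonempty V] (M : Matrix V V ℝ) (hM : M.IsHermitian) :
    ∃ i₀ : V, (∀ i, hM.eigenvalues i ≤ hM.eigenvalues i₀) ∧
      sSup (spectrum ℝ M) = hM.eigenvalues i₀ := by
  obtain ⟨i₀, -, hmax⟩ := Finset.exists_max_image Finset.univ hM.eigenvalues ⟨Classical.arbitrary V, Finset.mem_univ _⟩
  have hmax' : ∀ i, hM.eigenvalues i ≤ hM.eigenvalues i₀ := fun i => hmax i (Finset.mem_univ i)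
  have hub : ∀ μ ∈ spectrum ℝ M, μ ≤ hM.eigenvalues i₀ := by
    intro μ hμ
    obtain ⟨x, hx0, hxe⟩ := mem_spectrum_exists_eigvec M hμ
    have h1 := quadform_le_of_eig M hM _ hmax' x
    rw [hxe, dotProduct_smul, smul_eq_mul] at h1
    exact le_of_mul_le_mul_right (by linarith) (dotProduct_self_pos hx0)
  have hmem : hM.eigenvalues i₀ ∈ spectrum ℝ M := hM.eigenvalues_mem_spectrum_real i₀
  exact ⟨i₀, hmax', le_antisymm (csSup_le ⟨_, hmem⟩ hub) (le_csSup ⟨_, hub⟩ hmem)⟩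

lemma quadform_le_sSup [Nonempty V] (M : Matrix V V ℝ) (hM : M.IsHermitian) (x : V → ℝ) :
    x ⬝ᵥ M *ᵥ x ≤ sSup (spectrum ℝ M) * (x ⬝ᵥ x) := by
  obtain ⟨i₀, hmax, hsup⟩ := sSup_spectrum_eq_max M hM
  rw [hsup]
  exact quadform_le_of_eig M hM _ hmax x

lemma exists_nonneg_eigvec [Nonempty V] (M : Matrix V V ℝ) (hM : M.IsHermitian)
    (hpos : ∀ u v, 0 ≤ M u v) :
    ∃ x : V → ℝ, (∀ v, 0 ≤ x v) ∧ x ≠ 0 ∧ M *ᵥ x = sSup (spectrum ℝ M) • x := by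
  obtain ⟨i₀, hmax, hsup⟩ := sSup_spectrum_eq_max M hM
  set q := hM.eigenvalues i₀ with hq
  set x₀ : V → ℝ := ⇑(hM.eigenvectorBasis i₀) with hx₀def
  have hx₀ : M *ᵥ x₀ = q • x₀ := hM.mulVec_eigenvectorBasis i₀
  have hx₀ne : x₀ ≠ 0 := by
    intro h
    apply hM.eigenvectorBasis.orthonormal.ne_zero i₀
    ext i
    exact congrFun h i
  set y : V → ℝ := fun v => |x₀ v| with hydef
  have hyy : y ⬝ᵥ y = x₀ ⬝ᵥ x₀ :=
    Finset.sum_congr rfl fun i _ => abs_mul_abs_self _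
  have hge : x₀ ⬝ᵥ M *ᵥ x₀ ≤ y ⬝ᵥ M *ᵥ y := by
    simp only [dotProduct, Matrix.mulVec, Finset.mul_sum]
    refine Finset.sum_le_sum fun u _ => ?_
    refine Finset.sum_le_sum fun v _ => ?_
    calc x₀ u * (M u v * x₀ v) = M u v * (x₀ u * x₀ v) := by ring
      _ ≤ M u v * |x₀ u * x₀ v| := mul_le_mul_of_nonneg_left (le_abs_self _) (hpos u v)
      _ = y u * (M u v * y v) := by rw [abs_mul]; ring
  have hle : y ⬝ᵥ M *ᵥ y ≤ q * (y ⬝ᵥ y) := quadform_le_of_eig M hM _ hmax y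
  have heq : y ⬝ᵥ M *ᵥ y = q * (y ⬝ᵥ y) := by
    have h1 : x₀ ⬝ᵥ M *ᵥ x₀ = q * (x₀ ⬝ᵥ x₀) := by
      rw [hx₀, dotProduct_smul, smul_eq_mul]
    have h2 : q * (y ⬝ᵥ y) = q * (x₀ ⬝ᵥ x₀) := by rw [hyy]
    linarith [hge, hle, h1, h2]
  have hzero : (q • (1 : Matrix V V ℝ) - M) *ᵥ y = 0 := by
    apply ((psd_smul_one_sub M hM q hmax).dotProduct_mulVec_zero_iff y).mp
    rw [star_trivial, Matrix.sub_mulVec, dotProduct_sub, Matrix.smul_mulVec,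
      Matrix.one_mulVec, dotProduct_smul, smul_eq_mul, heq, sub_self]
  have hyne : y ≠ 0 := by
    intro h
    apply hx₀ne
    funext v
    have := congrFun h v
    simpa [hydef, abs_eq_zero] using this
  refine ⟨y, fun v => abs_nonneg _, hyne, ?_⟩
  rw [Matrix.sub_mulVec, Matrix.smul_mulVec, Matrix.one_mulVec] at hzero
  rw [hsup]
  exact (sub_eq_zero.mp hzero).symm

open Finset SimpleGraph Matrix
open scoped Classical


variable {V : Type*} [Fintype V] [DecidableEq V]

lemma degCount_eq_degree (G : SimpleGraph V) (v : V) : degCount G v = G.degree v := by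
  rw [degCount, ← SimpleGraph.card_neighborFinset_eq_degree]
  rw [SimpleGraph.neighborFinset_def]
  exact Set.ncard_eq_toFinset_card' _

lemma edgeCount_eq (G : SimpleGraph V) : edgeCount G = G.edgeFinset.card := by
  rw [edgeCount, SimpleGraph.edgeFinset, Set.ncard_eq_toFinset_card']

lemma degree_le_edgeCount (G : SimpleGraph V) (v : V) : G.degree v ≤ edgeCount G := by
  rw [edgeCount_eq, ← SimpleGraph.card_incidenceFinset_eq_degree]
  refine Finset.card_le_card ?_
  intro e he
  rw [SimpleGraph.mem_incidenceFinset] at he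
  rw [SimpleGraph.mem_edgeFinset]
  exact he.1

lemma signlessLaplacian_isHermitian (G : SimpleGraph V) :
    (signlessLaplacian G).IsHermitian := by
  ext u v
  simp only [Matrix.conjTranspose_apply, signlessLaplacian, Matrix.of_apply, star_trivial]
  by_cases h : u = v
  · subst h; rfl
  · rw [if_neg h, if_neg (Ne.symm h)]
    congr 1
    by_cases hadj : G.Adj u v
    · rw [if_pos hadj, if_pos hadj.symm]
    · rw [if_neg hadj, if_neg (fun h' => hadj h'.symm)]

lemma signlessLaplacian_nonneg (G : SimpleGraph V) (u v : V) :
    0 ≤ signlessLaplacian G u v := by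
  simp only [signlessLaplacian, Matrix.of_apply]
  positivity

lemma signlessLaplacian_mulVec (G : SimpleGraph V) (x : V → ℝ) (v : V) :
    (signlessLaplacian G *ᵥ x) v =
      (G.degree v) * x v + ∑ u ∈ G.neighborFinset v, x u := by
  simp only [Matrix.mulVec, dotProduct, signlessLaplacian, Matrix.of_apply, add_mul,
    Finset.sum_add_distrib, ite_mul, zero_mul, one_mul]
  congr 1
  · rw [Finset.sum_ite_eq (Finset.univ) v (fun u => (degCount G v : ℝ) * x u)]
    · simp [degCount_eq_degree]
  · simp [SimpleGraph.neighborFinset_eq_filter, Finset.sum_filter]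

section Join
variable {α β : Type*} [Fintype α] [Fintype β] [DecidableEq α] [DecidableEq β]
  (G₁ : SimpleGraph α) (G₂ : SimpleGraph β)

lemma join_disj (s : Finset α) (t : Finset β) :
    Disjoint (s.map ⟨Sum.inl, Sum.inl_injective⟩) (t.map ⟨Sum.inr, Sum.inr_injective⟩) := by
  rw [Finset.disjoint_left]
  rintro (w | w) hw hw' <;> simp_all

lemma join_nbr_inl (u : α) : (joinGraph G₁ G₂).neighborFinset (Sum.inl u) =
    ((G₁.neighborFinset u).map ⟨Sum.inl, Sum.inl_injective⟩) ∪
      (Finset.univ.map ⟨Sum.inr, Sum.inr_injective⟩) := by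
  ext w
  rcases w with w | w <;> rw [SimpleGraph.mem_neighborFinset] <;> simp [joinGraph]

lemma join_nbr_inr (v : β) : (joinGraph G₁ G₂).neighborFinset (Sum.inr v) =
    ((G₂.neighborFinset v).map ⟨Sum.inr, Sum.inr_injective⟩) ∪
      (Finset.univ.map ⟨Sum.inl, Sum.inl_injective⟩) := by
  ext w
  rcases w with w | w <;> rw [SimpleGraph.mem_neighborFinset] <;> simp [joinGraph]

lemma join_degree_inl (u : α) :
    (joinGraph G₁ G₂).degree (Sum.inl u) = G₁.degree u + Fintype.card β := by
  rw [← SimpleGraph.card_neighborFinset_eq_degree, join_nbr_inl,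
    Finset.card_union_of_disjoint (join_disj _ _), Finset.card_map, Finset.card_map,
    Finset.card_univ, SimpleGraph.card_neighborFinset_eq_degree]

lemma join_degree_inr (v : β) :
    (joinGraph G₁ G₂).degree (Sum.inr v) = G₂.degree v + Fintype.card α := by
  rw [← SimpleGraph.card_neighborFinset_eq_degree, join_nbr_inr,
    Finset.card_union_of_disjoint (join_disj _ _).symm, Finset.card_map, Finset.card_map,
    Finset.card_univ, SimpleGraph.card_neighborFinset_eq_degree]

lemma join_sum_nbr_inl (x : α ⊕ β → ℝ) (u : α) :
    ∑ w ∈ (joinGraph G₁ G₂).neighborFinset (Sum.inl u), x w =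
      (∑ w ∈ G₁.neighborFinset u, x (Sum.inl w)) + ∑ v : β, x (Sum.inr v) := by
  rw [join_nbr_inl, Finset.sum_union (join_disj _ _), Finset.sum_map, Finset.sum_map]
  rfl

lemma join_sum_nbr_inr (x : α ⊕ β → ℝ) (v : β) :
    ∑ w ∈ (joinGraph G₁ G₂).neighborFinset (Sum.inr v), x w =
      (∑ w ∈ G₂.neighborFinset v, x (Sum.inr w)) + ∑ u : α, x (Sum.inl u) := by
  rw [join_nbr_inr, Finset.sum_union (join_disj _ _).symm, Finset.sum_map, Finset.sum_map]
  rfl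

lemma join_mulVec_inl (x : α ⊕ β → ℝ) (u : α) :
    (signlessLaplacian (joinGraph G₁ G₂) *ᵥ x) (Sum.inl u) =
      ((G₁.degree u : ℝ) + Fintype.card β) * x (Sum.inl u) +
        ((∑ w ∈ G₁.neighborFinset u, x (Sum.inl w)) + ∑ v : β, x (Sum.inr v)) := by
  rw [signlessLaplacian_mulVec, join_degree_inl, join_sum_nbr_inl]
  push_cast
  ring

lemma join_mulVec_inr (x : α ⊕ β → ℝ) (v : β) :
    (signlessLaplacian (joinGraph G₁ G₂) *ᵥ x) (Sum.inr v) =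
      ((G₂.degree v : ℝ) + Fintype.card α) * x (Sum.inr v) +
        ((∑ w ∈ G₂.neighborFinset v, x (Sum.inr w)) + ∑ u : α, x (Sum.inl u)) := by
  rw [signlessLaplacian_mulVec, join_degree_inr, join_sum_nbr_inr]
  push_cast
  ring

lemma join_mulVec_bot_inl (x : α ⊕ β → ℝ) (u : α) :
    (signlessLaplacian (joinGraph (⊥ : SimpleGraph α) G₂) *ᵥ x) (Sum.inl u) =
      (Fintype.card β : ℝ) * x (Sum.inl u) + ∑ v : β, x (Sum.inr v) := by
  rw [join_mulVec_inl]
  have hempty : ∀ (inst : Fintype ((⊥ : SimpleGraph α).neighborSet u)),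
      @SimpleGraph.neighborFinset α ⊥ u inst = ∅ :=
    fun inst => Finset.eq_empty_iff_forall_notMem.mpr
      (fun w hw => ((@SimpleGraph.mem_neighborFinset α ⊥ u inst w).mp hw).elim)
  have h1 : ∀ (inst : Fintype ((⊥ : SimpleGraph α).neighborSet u)),
      (@SimpleGraph.degree α ⊥ u inst : ℝ) = 0 := by
    intro inst
    rw [show @SimpleGraph.degree α ⊥ u inst = (@SimpleGraph.neighborFinset α ⊥ u inst).card
      from rfl, hempty inst]
    simp
  have h2 : ∀ (inst : Fintype ((⊥ : SimpleGraph α).neighborSet u)),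
      (∑ w ∈ @SimpleGraph.neighborFinset α ⊥ u inst, x (Sum.inl w)) = 0 := by
    intro inst
    rw [hempty inst]
    simp
  rw [h1 _, h2 _]
  ring

end Join

end Helpers

/-- bound on `q(G₁ ∨ G₂)` when `G₁` has few edges. -/
theorem stmt_9 {α β : Type*} [Fintype α] [Fintype β] [DecidableEq α] [DecidableEq β]
    (G₁ : SimpleGraph α) (G₂ : SimpleGraph β) (n : ℕ) (c1 : ℝ)
    (ha : 1 ≤ Fintype.card α) (hb : 1 ≤ Fintype.card β)
    (hn : Fintype.card α + Fintype.card β = n)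
    (hc1 : 0 < c1) (he : (edgeCount G₁ : ℝ) ≤ c1)
    (hac : 2 * c1 < (Fintype.card α : ℝ)) :
    qRad (joinGraph G₁ G₂) <
      qRad (joinGraph (⊥ : SimpleGraph α) G₂) +
        4 * c1 * ((n : ℝ) - Fintype.card α) /
          ((Fintype.card α : ℝ) - 2 * c1) ^ 2 := by
  classical
  have hαne : Nonempty α := Fintype.card_pos_iff.mp (by omega)
  have hβne : Nonempty β := Fintype.card_pos_iff.mp (by omega)
  set A : ℝ := (Fintype.card α : ℝ) with hA
  set B : ℝ := (Fintype.card β : ℝ) with hB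
  have hA1 : (1:ℝ) ≤ A := by rw [hA]; exact_mod_cast ha
  have hB1 : (1:ℝ) ≤ B := by rw [hB]; exact_mod_cast hb
  set J := joinGraph G₁ G₂ with hJ
  set J' := joinGraph (⊥ : SimpleGraph α) G₂ with hJ'
  set Q := signlessLaplacian J with hQdef
  set Q' := signlessLaplacian J' with hQ'def
  have hQH : Q.IsHermitian := signlessLaplacian_isHermitian J
  have hQ'H : Q'.IsHermitian := signlessLaplacian_isHermitian J'
  set q : ℝ := qRad J with hq
  set q' : ℝ := qRad J' with hq'
  have hqdef : q = sSup (spectrum ℝ Q) := rfl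
  have hq'def2 : q' = sSup (spectrum ℝ Q') := rfl
  -- nonnegative eigenvector
  obtain ⟨x, hx0, hxne, hxeig⟩ := exists_nonneg_eigvec Q hQH (signlessLaplacian_nonneg J)
  rw [← hqdef] at hxeig
  set S : ℝ := x ⬝ᵥ x with hSdef
  have hS : 0 < S := dotProduct_self_pos hxne
  set xl : α → ℝ := fun u => x (Sum.inl u) with hxl
  set xr : β → ℝ := fun v => x (Sum.inr v) with hxr
  set D : α → ℝ := fun u => (G₁.degree u : ℝ) with hD
  set T : α → ℝ := fun u => ∑ w ∈ G₁.neighborFinset u, xl w with hT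
  set S₂ : ℝ := ∑ v : β, xr v with hS₂
  have heig : ∀ v, (Q *ᵥ x) v = q * x v := fun v => by rw [hxeig]; rfl
  have heigl : ∀ u : α, q * xl u = (D u + B) * xl u + (T u + S₂) := by
    intro u
    rw [← heig (Sum.inl u)]
    exact join_mulVec_inl G₁ G₂ x u
  -- max of x on the left part
  obtain ⟨u₀, -, hmaxmem⟩ := Finset.exists_max_image Finset.univ xl
    ⟨Classical.arbitrary α, Finset.mem_univ _⟩
  set M : ℝ := xl u₀ with hM
  have hmax : ∀ u, xl u ≤ M := fun u => hmaxmem u (Finset.mem_univ u)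
  have hM0 : 0 < M := by
    rcases lt_or_ge 0 M with h | h
    · exact h
    · exfalso
      have hz : ∀ u : α, xl u = 0 := fun u => le_antisymm ((hmax u).trans h) (hx0 _)
      have hT0 : T u₀ = 0 := Finset.sum_eq_zero fun w _ => hz w
      have h2 := heigl u₀
      rw [hM] at *
      rw [hz u₀, hT0, mul_zero, mul_zero, zero_add, zero_add] at h2
      have hS₂0 : S₂ = 0 := h2.symm
      have hzr : ∀ v : β, xr v = 0 := by
        intro v
        have hle : xr v ≤ S₂ :=
          Finset.single_le_sum (fun v _ => hx0 (Sum.inr v)) (Finset.mem_univ v)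
        exact le_antisymm (hS₂0 ▸ hle) (hx0 _)
      apply hxne
      funext w
      rcases w with u | v
      · exact hz u
      · exact hzr v
  -- lower bound q ≥ A + B via test vector
  have hqn : A + B ≤ q := by
    set y : α ⊕ β → ℝ := Sum.elim (fun _ => B) (fun _ => A) with hy
    have hyy : y ⬝ᵥ y = A * B * (A + B) := by
      rw [dotProduct, Fintype.sum_sum_type]
      simp [hy, Finset.sum_const, Finset.card_univ]
      ring
    have hquad : A * B * (A + B) * (A + B) ≤ y ⬝ᵥ Q *ᵥ y := by
      have h1 : ∀ u : α, B * (B * (A + B)) ≤ y (Sum.inl u) * ((Q *ᵥ y) (Sum.inl u)) := by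
        intro u
        have he := join_mulVec_inl G₁ G₂ y u
        have hyl : y (Sum.inl u) = B := rfl
        have hd1 : (0:ℝ) ≤ (G₁.degree u : ℝ) := Nat.cast_nonneg _
        have hsum1 : (0:ℝ) ≤ ∑ w ∈ G₁.neighborFinset u, y (Sum.inl w) := by
          apply Finset.sum_nonneg; intro w _; rw [show y (Sum.inl w) = B from rfl]; linarith
        have hsum2 : (∑ v : β, y (Sum.inr v)) = B * A := by
          simp [hy, Finset.sum_const, Finset.card_univ, mul_comm]
          left; rfl
        rw [hyl, he, hyl, hsum2]
        have h5 : B * (A + B) ≤ ((G₁.degree u : ℝ) + B) * B +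
            ((∑ w ∈ G₁.neighborFinset u, y (Sum.inl w)) + B * A) := by nlinarith
        linarith [mul_le_mul_of_nonneg_left h5 (show (0:ℝ) ≤ B by linarith)]
      have h2 : ∀ v : β, A * (A * (A + B)) ≤ y (Sum.inr v) * ((Q *ᵥ y) (Sum.inr v)) := by
        intro v
        have he := join_mulVec_inr G₁ G₂ y v
        have hyr : y (Sum.inr v) = A := rfl
        have hsum1 : (0:ℝ) ≤ ∑ w ∈ G₂.neighborFinset v, y (Sum.inr w) := by
          apply Finset.sum_nonneg; intro w _; rw [show y (Sum.inr w) = A from rfl]; linarith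
        have hsum2 : (∑ u : α, y (Sum.inl u)) = A * B := by
          simp [hy, Finset.sum_const, Finset.card_univ, mul_comm]
          left; rfl
        rw [hyr, he, hyr, hsum2]
        have hd2 : (0:ℝ) ≤ (G₂.degree v : ℝ) := Nat.cast_nonneg _
        have h5 : A * (A + B) ≤ ((G₂.degree v : ℝ) + A) * A +
            ((∑ w ∈ G₂.neighborFinset v, y (Sum.inr w)) + A * B) := by nlinarith
        linarith [mul_le_mul_of_nonneg_left h5 (show (0:ℝ) ≤ A by linarith)]
      have := Finset.sum_le_sum (fun u (_ : u ∈ Finset.univ) => h1 u)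
      have h2' := Finset.sum_le_sum (fun v (_ : v ∈ Finset.univ) => h2 v)
      rw [dotProduct, Fintype.sum_sum_type]
      simp only [Finset.sum_const, Finset.card_univ, nsmul_eq_mul] at this h2'
      have hcalc : A * (B * (B * (A + B))) + B * (A * (A * (A + B)))
          = A * B * (A + B) * (A + B) := by ring
      calc A * B * (A + B) * (A + B)
          = A * (B * (B * (A + B))) + B * (A * (A * (A + B))) := by ring
        _ ≤ _ := by exact add_le_add this h2'
    have hub := quadform_le_sSup Q hQH y
    rw [← hqdef] at hub
    have hABpos : 0 < A * B * (A + B) := by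
      have h0A : (0:ℝ) < A := by linarith
      have h0B : (0:ℝ) < B := by linarith
      have : (0:ℝ) < A + B := by linarith
      positivity
    have := hquad.trans hub
    rw [hyy] at this
    exact le_of_mul_le_mul_left (by linarith [this]) hABpos
  -- degree bound
  have hDc : ∀ u, D u ≤ c1 := by
    intro u
    refine le_trans ?_ he
    show (G₁.degree u : ℝ) ≤ (edgeCount G₁ : ℝ)
    exact_mod_cast degree_le_edgeCount G₁ u
  have hTle : ∀ u, T u ≤ D u * M := by
    intro u
    have := Finset.sum_le_card_nsmul (G₁.neighborFinset u) xl M (fun w _ => hmax w)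
    simpa [SimpleGraph.card_neighborFinset_eq_degree, nsmul_eq_mul, hD] using this
  -- S₂ lower bound
  have hS₂ge : (A - 2 * c1) * M ≤ S₂ := by
    have h1 := heigl u₀
    have h2 : S₂ = (q - D u₀ - B) * M - T u₀ := by rw [hM] at *; linarith [h1]
    have h3 : (q - 2 * D u₀ - B) * M ≤ S₂ := by
      have := hTle u₀
      rw [h2]; nlinarith
    have h4 : A - 2 * c1 ≤ q - 2 * D u₀ - B := by
      have := hDc u₀; linarith [hqn]
    calc (A - 2 * c1) * M ≤ (q - 2 * D u₀ - B) * M :=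
          mul_le_mul_of_nonneg_right h4 hM0.le
      _ ≤ S₂ := h3
  -- Cauchy-Schwarz and norm decomposition
  set W : ℝ := ∑ v : β, xr v ^ 2 with hW
  have hCS : S₂ ^ 2 ≤ B * W := by
    have := sq_sum_le_card_mul_sum_sq (s := (Finset.univ : Finset β)) (f := xr)
    simpa [Finset.card_univ, hB] using this
  have hSdecomp : S = (∑ u : α, xl u ^ 2) + W := by
    rw [hSdef, dotProduct, Fintype.sum_sum_type, hW]
    congr 1
    · exact Finset.sum_congr rfl fun i _ => (pow_two (xl i)).symm
    · exact Finset.sum_congr rfl fun i _ => (pow_two (xr i)).symm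
  have hWle : W ≤ S - M ^ 2 := by
    have hMsq : M ^ 2 ≤ ∑ u : α, xl u ^ 2 := by
      have := Finset.single_le_sum (f := fun u => xl u ^ 2)
        (fun u _ => sq_nonneg (xl u)) (Finset.mem_univ u₀)
      simpa [hM] using this
    linarith [hSdecomp]
  have hKey : (A - 2 * c1) ^ 2 * M ^ 2 < B * S := by
    have h0 : 0 < A - 2 * c1 := by linarith
    have h1 : ((A - 2 * c1) * M) ^ 2 ≤ S₂ ^ 2 := by
      have := hS₂ge
      nlinarith [mul_pos h0 hM0]
    have h2 : B * M ^ 2 > 0 := by nlinarith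
    nlinarith [hCS, hWle]
  -- quadratic form difference
  have hxQx : x ⬝ᵥ Q *ᵥ x = q * S := by
    rw [hxeig, dotProduct_smul, smul_eq_mul, ← hSdef]
  have hbotnbr : ∀ u : α, (⊥ : SimpleGraph α).neighborFinset u = ∅ := by
    intro u
    ext w
    simp [SimpleGraph.mem_neighborFinset]
  have hdiff : x ⬝ᵥ Q *ᵥ x = x ⬝ᵥ Q' *ᵥ x + ∑ u : α, xl u * (D u * xl u + T u) := by
    have e0 : ∀ z : α ⊕ β → ℝ, x ⬝ᵥ z =
        (∑ u : α, xl u * z (Sum.inl u)) + ∑ v : β, xr v * z (Sum.inr v) := by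
      intro z
      rw [dotProduct, Fintype.sum_sum_type]
    rw [e0 (Q *ᵥ x), e0 (Q' *ᵥ x)]
    have e1 : ∀ u : α, xl u * ((Q *ᵥ x) (Sum.inl u)) =
        xl u * ((Q' *ᵥ x) (Sum.inl u)) + xl u * (D u * xl u + T u) := by
      intro u
      rw [join_mulVec_inl G₁ G₂ x u, join_mulVec_bot_inl G₂ x u]
      have hTu : ∑ w ∈ G₁.neighborFinset u, x (Sum.inl w) = T u := rfl
      have hSS : ∑ v : β, x (Sum.inr v) = S₂ := rfl
      have hxlu : x (Sum.inl u) = xl u := rfl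
      have hDu : (G₁.degree u : ℝ) = D u := rfl
      rw [hTu, hSS, hxlu, hDu]
      ring
    have e2 : ∀ v : β, xr v * ((Q *ᵥ x) (Sum.inr v)) = xr v * ((Q' *ᵥ x) (Sum.inr v)) := by
      intro v
      rw [join_mulVec_inr G₁ G₂ x v, join_mulVec_inr (⊥ : SimpleGraph α) G₂ x v]
    rw [Finset.sum_congr rfl fun u _ => e1 u, Finset.sum_congr rfl fun v _ => e2 v,
      Finset.sum_add_distrib]
    ring
  have hDelta : ∑ u : α, xl u * (D u * xl u + T u) ≤ 4 * c1 * M ^ 2 := by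
    have hterm : ∀ u : α, xl u * (D u * xl u + T u) ≤ 2 * D u * M ^ 2 := by
      intro u
      have h1 : 0 ≤ xl u := hx0 _
      have h2 : xl u ≤ M := hmax u
      have h3 : T u ≤ D u * M := hTle u
      have h4 : 0 ≤ D u := Nat.cast_nonneg _
      have h5 : 0 ≤ T u := Finset.sum_nonneg fun w _ => hx0 _
      have hinner : 0 ≤ D u * xl u + T u := add_nonneg (mul_nonneg h4 h1) h5
      have s1 : xl u * (D u * xl u + T u) ≤ M * (D u * xl u + T u) :=
        mul_le_mul_of_nonneg_right h2 hinner
      have s2 : D u * xl u + T u ≤ D u * M + D u * M := by nlinarith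
      nlinarith [s1, mul_le_mul_of_nonneg_left s2 hM0.le]
    have hsum := Finset.sum_le_sum (fun u (_ : u ∈ Finset.univ) => hterm u)
    have hdeg : ∑ u : α, D u = 2 * (edgeCount G₁ : ℝ) := by
      rw [hD, edgeCount_eq]
      have h := congrArg (Nat.cast : ℕ → ℝ) (SimpleGraph.sum_degrees_eq_twice_card_edges G₁)
      push_cast at h ⊢
      convert h
    calc ∑ u : α, xl u * (D u * xl u + T u) ≤ ∑ u : α, 2 * D u * M ^ 2 := hsum
      _ = 2 * M ^ 2 * ∑ u : α, D u := by rw [Finset.mul_sum]; exact Finset.sum_congr rfl fun u _ => by ring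
      _ = 4 * (edgeCount G₁ : ℝ) * M ^ 2 := by rw [hdeg]; ring
      _ ≤ 4 * c1 * M ^ 2 := by nlinarith [sq_nonneg M]
  have hQ'bound : x ⬝ᵥ Q' *ᵥ x ≤ q' * S := by
    have := quadform_le_sSup Q' hQ'H x
    rw [← hq'def2, ← hSdef] at this
    exact this
  -- final assembly
  have hP : (0:ℝ) < (A - 2 * c1) ^ 2 := by
    have : 0 < A - 2 * c1 := by linarith
    positivity
  have hfrac : 4 * c1 * M ^ 2 < 4 * c1 * B / (A - 2 * c1) ^ 2 * S := by
    rw [div_mul_eq_mul_div, lt_div_iff₀ hP]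
    nlinarith [hKey]
  have hmain : q * S < (q' + 4 * c1 * B / (A - 2 * c1) ^ 2) * S := by
    have h1 : q * S ≤ q' * S + 4 * c1 * M ^ 2 := by
      rw [← hxQx]
      rw [hdiff]
      linarith [hQ'bound, hDelta]
    have h2 : (q' + 4 * c1 * B / (A - 2 * c1) ^ 2) * S
        = q' * S + 4 * c1 * B / (A - 2 * c1) ^ 2 * S := by ring
    linarith [hfrac]
  have hfin : q < q' + 4 * c1 * B / (A - 2 * c1) ^ 2 :=
    lt_of_mul_lt_mul_right hmain hS.le
  have hnB : (n : ℝ) - A = B := by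
    rw [hA, hB]
    have : (Fintype.card α : ℝ) + (Fintype.card β : ℝ) = n := by exact_mod_cast hn
    linarith
  calc qRad (joinGraph G₁ G₂) = q := rfl
    _ < q' + 4 * c1 * B / (A - 2 * c1) ^ 2 := hfin
    _ = qRad (joinGraph (⊥ : SimpleGraph α) G₂) +
        4 * c1 * ((n : ℝ) - Fintype.card α) / ((Fintype.card α : ℝ) - 2 * c1) ^ 2 := by
      rw [hnB]
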